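/- There exist density operators ρ and σ on ℂ² ⊗ ℂ² such that tr(ρ (L ⊗ I)ᵏ) = tr(σ (L ⊗ I)ᵏ) for all natural numbers k and all L ∈ {σ_x, σ_y, σ_z} (the Pauli matrices), yet ρ commutes with σ_z ⊗ I while σ does not commute with σ_z ⊗ I. Concretely, ρ = ½|+z⟩⟨+z|⊗|0⟩⟨0| + ½|−z⟩⟨−z|⊗|1⟩⟨1| and σ = ½|+x⟩⟨+x|⊗|0⟩⟨0| + ½|−x⟩⟨−x|⊗|1⟩⟨1| satisfy these properties. -/
import Mathlib


open Matrix Kronecker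

/-- Pauli X matrix. -/
def pauliX : Matrix (Fin 2) (Fin 2) ℂ := !![0, 1; 1, 0]
/-- Pauli Y matrix. -/
def pauliY : Matrix (Fin 2) (Fin 2) ℂ := !![0, -Complex.I; Complex.I, 0]
/-- Pauli Z matrix. -/
def pauliZ : Matrix (Fin 2) (Fin 2) ℂ := !![1, 0; 0, -1]

/-- `ρ = ½|+z⟩⟨+z|⊗|0⟩⟨0| + ½|−z⟩⟨−z|⊗|1⟩⟨1|`. -/
noncomputable def rhoState : Matrix (Fin 2 × Fin 2) (Fin 2 × Fin 2) ℂ :=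
  (1/2 : ℂ) • (!![1, 0; 0, 0] ⊗ₖ !![1, 0; 0, 0]) +
  (1/2 : ℂ) • (!![0, 0; 0, 1] ⊗ₖ !![0, 0; 0, 1])

/-- `σ = ½|+x⟩⟨+x|⊗|0⟩⟨0| + ½|−x⟩⟨−x|⊗|1⟩⟨1|`. -/
noncomputable def sigmaState : Matrix (Fin 2 × Fin 2) (Fin 2 × Fin 2) ℂ :=
  (1/4 : ℂ) • (!![1, 1; 1, 1] ⊗ₖ !![1, 0; 0, 0]) +
  (1/4 : ℂ) • (!![1, -1; -1, 1] ⊗ₖ !![0, 0; 0, 1])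

lemma pow_of_sq_one (M : Matrix (Fin 2 × Fin 2) (Fin 2 × Fin 2) ℂ)
    (h : M ^ 2 = 1) (k : ℕ) : M ^ k = 1 ∨ M ^ k = M := by
  induction k with
  | zero => left; simp
  | succ k ih =>
    rcases ih with h1 | h1
    · right; rw [pow_succ, h1, one_mul]
    · left; rw [pow_succ, h1, ← pow_two, h]

lemma sqX : (pauliX ⊗ₖ (1 : Matrix (Fin 2) (Fin 2) ℂ)) ^ 2 = 1 := by
  rw [pow_two, ← Matrix.mul_kronecker_mul, one_mul]
  ext ⟨i,j⟩ ⟨k,l⟩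
  fin_cases i <;> fin_cases j <;> fin_cases k <;> fin_cases l <;>
    simp [pauliX, Matrix.mul_apply, Fin.sum_univ_two, Matrix.one_apply, Prod.ext_iff]

lemma sqY : (pauliY ⊗ₖ (1 : Matrix (Fin 2) (Fin 2) ℂ)) ^ 2 = 1 := by
  rw [pow_two, ← Matrix.mul_kronecker_mul, one_mul]
  ext ⟨i,j⟩ ⟨k,l⟩
  fin_cases i <;> fin_cases j <;> fin_cases k <;> fin_cases l <;>
    simp [pauliY, Matrix.mul_apply, Fin.sum_univ_two, Matrix.one_apply, Prod.ext_iff,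
      Complex.ext_iff]

lemma sqZ : (pauliZ ⊗ₖ (1 : Matrix (Fin 2) (Fin 2) ℂ)) ^ 2 = 1 := by
  rw [pow_two, ← Matrix.mul_kronecker_mul, one_mul]
  ext ⟨i,j⟩ ⟨k,l⟩
  fin_cases i <;> fin_cases j <;> fin_cases k <;> fin_cases l <;>
    simp [pauliZ, Matrix.mul_apply, Fin.sum_univ_two, Matrix.one_apply, Prod.ext_iff]

lemma trace_eq_one : (rhoState * 1).trace = (sigmaState * 1).trace := by
  simp [rhoState, sigmaState, Matrix.trace, Fintype.sum_prod_type, Fin.sum_univ_two]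
  ring

lemma traceX : (rhoState * (pauliX ⊗ₖ (1 : Matrix (Fin 2) (Fin 2) ℂ))).trace =
    (sigmaState * (pauliX ⊗ₖ (1 : Matrix (Fin 2) (Fin 2) ℂ))).trace := by
  simp [rhoState, sigmaState, pauliX, Matrix.trace, Matrix.mul_apply,
    Fintype.sum_prod_type, Fin.sum_univ_two, Matrix.one_apply]

lemma traceY : (rhoState * (pauliY ⊗ₖ (1 : Matrix (Fin 2) (Fin 2) ℂ))).trace =
    (sigmaState * (pauliY ⊗ₖ (1 : Matrix (Fin 2) (Fin 2) ℂ))).trace := by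
  simp [rhoState, sigmaState, pauliY, Matrix.trace, Matrix.mul_apply,
    Fintype.sum_prod_type, Fin.sum_univ_two, Matrix.one_apply]

lemma traceZ : (rhoState * (pauliZ ⊗ₖ (1 : Matrix (Fin 2) (Fin 2) ℂ))).trace =
    (sigmaState * (pauliZ ⊗ₖ (1 : Matrix (Fin 2) (Fin 2) ℂ))).trace := by
  simp [rhoState, sigmaState, pauliZ, Matrix.trace, Matrix.mul_apply,
    Fintype.sum_prod_type, Fin.sum_univ_two, Matrix.one_apply]

/-- All moments of the generators `σ_x⊗I, σ_y⊗I, σ_z⊗I` agree on `ρ` and `σ`,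
yet `ρ` commutes with `σ_z⊗I` while `σ` does not. -/
theorem noether_moments_insufficient :
    (∀ k : ℕ, ∀ L ∈ ({pauliX, pauliY, pauliZ} : Set (Matrix (Fin 2) (Fin 2) ℂ)),
      (rhoState * (L ⊗ₖ (1 : Matrix (Fin 2) (Fin 2) ℂ)) ^ k).trace =
      (sigmaState * (L ⊗ₖ (1 : Matrix (Fin 2) (Fin 2) ℂ)) ^ k).trace) ∧
    rhoState * (pauliZ ⊗ₖ (1 : Matrix (Fin 2) (Fin 2) ℂ)) =
      (pauliZ ⊗ₖ (1 : Matrix (Fin 2) (Fin 2) ℂ)) * rhoState ∧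
    sigmaState * (pauliZ ⊗ₖ (1 : Matrix (Fin 2) (Fin 2) ℂ)) ≠
      (pauliZ ⊗ₖ (1 : Matrix (Fin 2) (Fin 2) ℂ)) * sigmaState := by
  refine ⟨?_, ?_, ?_⟩
  · intro k L hL
    simp only [Set.mem_insert_iff, Set.mem_singleton_iff] at hL
    rcases hL with rfl | rfl | rfl
    · rcases pow_of_sq_one _ sqX k with h | h <;> rw [h]
      · exact trace_eq_one
      · exact traceX
    · rcases pow_of_sq_one _ sqY k with h | h <;> rw [h]
      · exact trace_eq_one
      · exact traceY
    · rcases pow_of_sq_one _ sqZ k with h | h <;> rw [h]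
      · exact trace_eq_one
      · exact traceZ
  · simp only [rhoState, add_mul, mul_add, Matrix.smul_mul, Matrix.mul_smul,
      ← Matrix.mul_kronecker_mul, one_mul, mul_one]
    norm_num [pauliZ, Matrix.mul_fin_two]
    congr 1 <;> congr 2 <;> ext i j <;> fin_cases i <;> fin_cases j <;> simp
  · intro h
    have := congrFun (congrFun h ((0 : Fin 2), (0 : Fin 2))) ((1 : Fin 2), (0 : Fin 2))
    simp [sigmaState, pauliZ, Matrix.mul_apply, Fintype.sum_prod_type, Fin.sum_univ_two,
      Matrix.one_apply] at this
    norm_num at this
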